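/- Let f be the exponential generating function of the Catalan numbers. Then f'(t)/f(t) tends to 4 as t → +∞. -/

import Mathlib

/-!
The recursion `(n + 2) c_{n+1} = 2 (2n + 1) c_n` gives `4 c_n - c_{n+1} = 6 c_n / (n + 2)`, so
`4 f - f'` is the power series with coefficients `6 c_n / ((n + 2) n!) = o(c_n / n!)`. For a power
series with nonnegative coefficients that is not a polynomial, a coefficientwise `o` passes to the
sums as `t → ∞`: the tail is controlled termwise, and the finitely many remaining terms are
`o(f(t))` because `f` grows faster than any power of `t`. Hence `(4 f - f') / f → 0`.
-/

open Filter Asymptotics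

open scoped Nat

/-- The exponential generating function of the Catalan numbers. -/
noncomputable def catalanEGF (t : ℝ) : ℝ := ∑' n : ℕ, (catalan n : ℝ) * t ^ n / n !

section PowerSeriesAsymptotics

variable {a b : ℕ → ℝ}

theorem isLittleO_pow_tsum_mul_pow (ha : ∀ n, 0 ≤ a n) (ha_pos : ∃ᶠ n in atTop, 0 < a n)
    (hsum : ∀ t, Summable fun n => a n * t ^ n) (k : ℕ) :
    (fun t : ℝ => t ^ k) =o[atTop] fun t => ∑' n, a n * t ^ n := by
  obtain ⟨m, ham, hkm⟩ := (ha_pos.and_eventually (eventually_gt_atTop k)).exists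
  refine (isLittleO_pow_pow_atTop_of_lt hkm).trans_isBigO <| IsBigO.of_bound (a m)⁻¹ ?_
  filter_upwards [eventually_ge_atTop 0] with t ht
  have hterm : a m * t ^ m ≤ ∑' n, a n * t ^ n :=
    (hsum t).le_tsum m fun n _ => mul_nonneg (ha n) (pow_nonneg ht n)
  have hF : 0 ≤ ∑' n, a n * t ^ n := (mul_nonneg ham.le (pow_nonneg ht m)).trans hterm
  rwa [Real.norm_of_nonneg (pow_nonneg ht m), Real.norm_of_nonneg hF, le_inv_mul_iff₀ ham]

theorem Asymptotics.IsLittleO.tsum_mul_pow (hb : b =o[atTop] a) (ha : ∀ n, 0 ≤ a n)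
    (ha_pos : ∃ᶠ n in atTop, 0 < a n) (hsum : ∀ t, Summable fun n => a n * t ^ n) :
    (fun t : ℝ => ∑' n, b n * t ^ n) =o[atTop] fun t => ∑' n, a n * t ^ n := by
  refine IsLittleO.of_bound fun ε hε => ?_
  obtain ⟨N, hN⟩ := eventually_atTop.1 (hb.bound (half_pos hε))
  have hhead : (fun t : ℝ => ∑ n ∈ Finset.range N, b n * t ^ n) =o[atTop]
      fun t => ∑' n, a n * t ^ n :=
    IsLittleO.fun_sum fun n _ =>
      (isLittleO_pow_tsum_mul_pow ha ha_pos hsum n).const_mul_left (b n)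
  filter_upwards [hhead.bound (half_pos hε), eventually_ge_atTop 0] with t hhead_t ht
  have htail_le : ∀ k, ‖b (k + N) * t ^ (k + N)‖ ≤ ε / 2 * (a (k + N) * t ^ (k + N)) := by
    intro k
    have hbk := hN (k + N) (Nat.le_add_left N k)
    rw [Real.norm_of_nonneg (ha _)] at hbk
    rw [norm_mul, norm_pow, Real.norm_of_nonneg ht, ← mul_assoc]
    gcongr
  have htail_sum : Summable fun k => a (k + N) * t ^ (k + N) :=
    (summable_nat_add_iff N).2 (hsum t)
  have htail : ‖∑' k, b (k + N) * t ^ (k + N)‖ ≤ ε / 2 * ∑' n, a n * t ^ n := by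
    refine (tsum_of_norm_bounded (htail_sum.mul_left _).hasSum htail_le).trans ?_
    rw [tsum_mul_left]
    exact mul_le_mul_of_nonneg_left (tsum_comp_le_tsum_of_inj (hsum t)
      (fun n => mul_nonneg (ha n) (pow_nonneg ht n)) (add_left_injective N)) (by positivity)
  have hb_sum : Summable fun n => b n * t ^ n :=
    (summable_nat_add_iff N).1 ((htail_sum.mul_left _).of_norm_bounded htail_le)
  rw [← hb_sum.sum_add_tsum_nat_add N]
  calc _ ≤ ‖∑ n ∈ Finset.range N, b n * t ^ n‖ + ‖∑' k, b (k + N) * t ^ (k + N)‖ :=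
        norm_add_le _ _
    _ ≤ ε / 2 * ‖∑' n, a n * t ^ n‖ + ε / 2 * ‖∑' n, a n * t ^ n‖ := by
      gcongr
      refine htail.trans_eq ?_
      rw [Real.norm_of_nonneg (tsum_nonneg fun n => mul_nonneg (ha n) (pow_nonneg ht n))]
    _ = ε * ‖∑' n, a n * t ^ n‖ := by ring

end PowerSeriesAsymptotics

section ExponentialGeneratingFunction

variable {c : ℕ → ℝ} {C K : ℝ}

theorem summable_mul_pow_div_factorial (hc : ∀ n, |c n| ≤ C * K ^ n) (x : ℝ) :
    Summable fun n => c n * x ^ n / n ! := by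
  refine ((Real.summable_pow_div_factorial (K * |x|)).mul_left C).of_norm_bounded fun n => ?_
  rw [norm_div, norm_mul, norm_pow, Real.norm_eq_abs, Real.norm_eq_abs, Real.norm_natCast]
  calc |c n| * |x| ^ n / (n ! : ℝ) ≤ C * K ^ n * |x| ^ n / n ! := by gcongr; exact hc n
    _ = C * ((K * |x|) ^ n / n !) := by ring

theorem hasDerivAt_tsum_mul_pow_div_factorial (hc : ∀ n, |c n| ≤ C * K ^ n) (x : ℝ) :
    HasDerivAt (fun y => ∑' n, c n * y ^ n / n !) (∑' n, c (n + 1) * x ^ n / n !) x := by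
  have hshift : (fun y => ∑' n, c n * y ^ n / n !) =
      fun y => c 0 + ∑' n, c (n + 1) * y ^ (n + 1) / (n + 1)! := by
    funext y
    rw [(summable_mul_pow_div_factorial hc y).tsum_eq_zero_add]
    simp
  have hterm : ∀ n y, HasDerivAt (fun y => c (n + 1) * y ^ (n + 1) / (n + 1)!)
      (c (n + 1) * y ^ n / n !) y := by
    intro n y
    refine (((hasDerivAt_pow (n + 1) y).const_mul (c (n + 1))).div_const
      ((n + 1)! : ℝ)).congr_deriv ?_
    rw [Nat.add_sub_cancel, Nat.factorial_succ]
    push_cast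
    field_simp
  obtain ⟨R, hxR⟩ : ∃ R, |x| < R := ⟨|x| + 1, lt_add_one _⟩
  have hbound : ∀ n, ∀ y ∈ Metric.ball (0 : ℝ) R,
      ‖c (n + 1) * y ^ n / (n ! : ℝ)‖ ≤ C * K * ((K * R) ^ n / n !) := by
    intro n y hy
    rw [mem_ball_zero_iff, Real.norm_eq_abs] at hy
    rw [norm_div, norm_mul, norm_pow, Real.norm_eq_abs, Real.norm_eq_abs, Real.norm_natCast]
    have hcK : |c (n + 1)| ≤ C * K * K ^ n := by rw [mul_assoc, ← pow_succ']; exact hc (n + 1)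
    calc |c (n + 1)| * |y| ^ n / (n ! : ℝ) ≤ C * K * K ^ n * R ^ n / n ! := by
          gcongr
          exact (abs_nonneg _).trans hcK
      _ = C * K * ((K * R) ^ n / n !) := by ring
  rw [hshift]
  refine (hasDerivAt_tsum_of_isPreconnected
    ((Real.summable_pow_div_factorial (K * R)).mul_left (C * K)) Metric.isOpen_ball
    (convex_ball 0 R).isPreconnected (fun n y _ => hterm n y) hbound (Metric.mem_ball_self ?_)
    ?_ ?_).const_add (c 0)
  · exact (abs_nonneg x).trans_lt hxR
  · simp
  · rwa [mem_ball_zero_iff, Real.norm_eq_abs]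

end ExponentialGeneratingFunction

theorem catalan_le_four_pow (n : ℕ) : catalan n ≤ 4 ^ n :=
  (Nat.le_mul_of_pos_left _ n.succ_pos).trans
    ((succ_mul_catalan_eq_centralBinom n).trans_le (Nat.centralBinom_le_four_pow n))

theorem add_two_mul_catalan_succ (n : ℕ) :
    (n + 2) * catalan (n + 1) = 2 * (2 * n + 1) * catalan n := by
  apply Nat.eq_of_mul_eq_mul_left n.succ_pos
  calc (n + 1) * ((n + 2) * catalan (n + 1)) = (n + 1) * (n + 1).centralBinom := by
        rw [← succ_mul_catalan_eq_centralBinom]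
    _ = 2 * (2 * n + 1) * n.centralBinom := Nat.succ_mul_centralBinom_succ n
    _ = (n + 1) * (2 * (2 * n + 1) * catalan n) := by
        rw [← succ_mul_catalan_eq_centralBinom]; ring

theorem catalan_pos (n : ℕ) : 0 < catalan n :=
  Nat.pos_of_ne_zero fun h => Nat.centralBinom_ne_zero n <| by
    rw [← succ_mul_catalan_eq_centralBinom, h, mul_zero]

theorem abs_catalan_le_four_pow (n : ℕ) : |(catalan n : ℝ)| ≤ 1 * 4 ^ n := by
  rw [Nat.abs_cast, one_mul]
  exact_mod_cast catalan_le_four_pow n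

theorem hasDerivAt_catalanEGF (t : ℝ) :
    HasDerivAt catalanEGF (∑' n, (catalan (n + 1) : ℝ) * t ^ n / n !) t :=
  hasDerivAt_tsum_mul_pow_div_factorial abs_catalan_le_four_pow t

theorem four_mul_catalanEGF_sub_deriv (t : ℝ) :
    4 * catalanEGF t - deriv catalanEGF t =
      ∑' n, 6 * (catalan n : ℝ) / ((n + 2) * n !) * t ^ n := by
  have hsucc : ∀ n, |(catalan (n + 1) : ℝ)| ≤ 4 * 4 ^ n := fun n => by
    simpa [pow_succ', mul_comm] using abs_catalan_le_four_pow (n + 1)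
  rw [(hasDerivAt_catalanEGF t).deriv, catalanEGF, ← tsum_mul_left,
    ← ((summable_mul_pow_div_factorial abs_catalan_le_four_pow t).mul_left 4).tsum_sub
      (summable_mul_pow_div_factorial hsucc t)]
  congr 1
  funext n
  have hrec : ((n : ℝ) + 2) * catalan (n + 1) = 2 * (2 * n + 1) * catalan n := by
    exact_mod_cast add_two_mul_catalan_succ n
  field_simp
  linear_combination (-t ^ n) * hrec

theorem catalanEGF_pos {t : ℝ} (ht : 0 ≤ t) : 0 < catalanEGF t := by
  have h0 := (summable_mul_pow_div_factorial abs_catalan_le_four_pow t).le_tsum 0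
    fun n _ => by positivity
  simp only [catalan_zero, Nat.cast_one, pow_zero, Nat.factorial_zero, div_one, mul_one] at h0
  exact one_pos.trans_le h0

theorem isLittleO_six_mul_catalan_div :
    (fun n : ℕ => 6 * (catalan n : ℝ) / ((n + 2) * n !)) =o[atTop]
      fun n => (catalan n : ℝ) / n ! := by
  have hlim : Tendsto (fun n : ℕ => 6 / ((n : ℝ) + 2)) atTop (nhds 0) :=
    tendsto_const_nhds.div_atTop (tendsto_natCast_atTop_atTop.atTop_add tendsto_const_nhds)
  refine (((isLittleO_one_iff ℝ).2 hlim).mul_isBigO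
    (isBigO_refl (fun n : ℕ => (catalan n : ℝ) / n !) atTop)).congr' ?_ ?_
  · exact Eventually.of_forall fun n => by field_simp
  · exact Eventually.of_forall fun n => one_mul _

/-- For the exponential generating function f of the Catalan numbers,
f'(t)/f(t) tends to 4 as t → +∞. -/
theorem catalan_egf_logderiv_tendsto_atTop :
    Filter.Tendsto (fun t : ℝ => deriv catalanEGF t / catalanEGF t)
      Filter.atTop (nhds 4) := by
  have hEGF : catalanEGF = fun t => ∑' n, (catalan n : ℝ) / n ! * t ^ n := by
    funext t
    simp_rw [div_mul_eq_mul_div]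
    rfl
  have hgap : (fun t => 4 * catalanEGF t - deriv catalanEGF t) =o[atTop] catalanEGF := by
    simp_rw [four_mul_catalanEGF_sub_deriv, hEGF]
    refine isLittleO_six_mul_catalan_div.tsum_mul_pow (fun n => by positivity)
      (Frequently.of_forall fun n => by have := catalan_pos n; positivity) fun t => ?_
    simpa only [div_mul_eq_mul_div] using
      summable_mul_pow_div_factorial abs_catalan_le_four_pow t
  have hlim := (tendsto_const_nhds (x := (4 : ℝ))).sub hgap.tendsto_div_nhds_zero
  rw [sub_zero] at hlim
  refine hlim.congr' ?_
  filter_upwards [eventually_ge_atTop 0] with t ht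
  have hne := (catalanEGF_pos ht).ne'
  field_simp
  ring
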